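/- Let a < b be real numbers and let f : ℝ → ℝ be continuously differentiable on [a,b]. If f attains a global minimum over [a,b] at some interior point t* ∈ (a,b), then D^α_{*a} f(t*) ≤ 0 for all α ∈ (0,1). -/

import Mathlib

/-- The Caputo fractional derivative of order `α` with starting point `a`:
`D^α_{*a} f(t) = (1/Γ(1-α)) ∫_a^t (t-s)^(-α) f'(s) ds`. -/
noncomputable def caputoDeriv (a α : ℝ) (f : ℝ → ℝ) (t : ℝ) : ℝ :=
  (Real.Gamma (1 - α))⁻¹ * ∫ s in a..t, (t - s) ^ (-α) * deriv f s

/-!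
Put `g = f - f t⋆ ≥ 0` on `[a, t⋆]`. For `a ≤ c < t⋆`, integrating by parts against the
nonsingular weight `(t⋆ - s)^(-α)` on `[a, c]` gives
`∫_a^c (t⋆-s)^(-α) g' = (t⋆-c)^(-α) g(c) - (t⋆-a)^(-α) g(a) - α ∫_a^c (t⋆-s)^(-α-1) g`,
and the last two terms are `≤ 0`. Since `f` is differentiable at `t⋆`, the remaining boundary
term is `O((t⋆-c)^(1-α))`, which tends to `0` as `c → t⋆` because `α < 1`; the left side tends
to the Caputo integral, the weight being integrable for the same reason.
-/

open MeasureTheory Filter Set intervalIntegral Topology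

theorem intervalIntegrable_sub_rpow_neg {α : ℝ} (hα : α < 1) (a t : ℝ) :
    IntervalIntegrable (fun s => (t - s) ^ (-α)) volume a t := by
  simpa using ((intervalIntegrable_rpow' (a := 0) (b := t - a) (by linarith)).comp_sub_left t).symm

theorem hasDerivAt_sub_rpow_neg {α s t : ℝ} (hs : s < t) :
    HasDerivAt (fun s => (t - s) ^ (-α)) (α * (t - s) ^ (-α - 1)) s := by
  simpa using ((hasDerivAt_id s).const_sub t).rpow_const (p := -α) (Or.inl (sub_pos.2 hs).ne')

theorem integral_sub_rpow_neg_mul_deriv_le {f f' : ℝ → ℝ} {a c t α : ℝ} (hac : a ≤ c)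
    (hct : c < t) (hα : 0 ≤ α) (hf : ContinuousOn f (Icc a c))
    (hderiv : ∀ s ∈ Ioo a c, HasDerivAt f (f' s) s) (hf' : IntervalIntegrable f' volume a c)
    (hmin : ∀ s ∈ Icc a c, f t ≤ f s) :
    ∫ s in a..c, (t - s) ^ (-α) * f' s ≤ (t - c) ^ (-α) * (f c - f t) := by
  have hlt : ∀ s ∈ Icc a c, s < t := fun s hs => hs.2.trans_lt hct
  have hweight : ContinuousOn (fun s => (t - s) ^ (-α)) (Icc a c) := fun s hs =>
    (hasDerivAt_sub_rpow_neg (hlt s hs)).continuousAt.continuousWithinAt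
  have hweight' : ContinuousOn (fun s => α * (t - s) ^ (-α - 1)) (Icc a c) :=
    continuousOn_const.mul <| (continuousOn_const.sub continuousOn_id).rpow_const
      fun s hs => Or.inl (sub_pos.2 (hlt s hs)).ne'
  have hweight_deriv : ∀ s ∈ Ioo a c, HasDerivAt (fun s => (t - s) ^ (-α))
      (α * (t - s) ^ (-α - 1)) s := fun s hs =>
    hasDerivAt_sub_rpow_neg (hlt s (Ioo_subset_Icc_self hs))
  rw [← uIcc_of_le hac] at hweight hweight' hf
  have hparts := integral_mul_deriv_eq_deriv_mul_of_hasDerivAt (v := fun s => f s - f t)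
    hweight (hf.sub continuousOn_const) (by simpa [hac] using hweight_deriv)
    (by simpa [hac] using fun s hs => (hderiv s hs).sub_const (f t))
    hweight'.intervalIntegrable hf'
  have hleft : 0 ≤ (t - a) ^ (-α) * (f a - f t) :=
    mul_nonneg (Real.rpow_nonneg (sub_pos.2 (hlt a ⟨le_rfl, hac⟩)).le _)
      (sub_nonneg.2 (hmin a ⟨le_rfl, hac⟩))
  have hinterior : 0 ≤ ∫ s in a..c, α * (t - s) ^ (-α - 1) * (f s - f t) :=
    integral_nonneg hac fun s hs => mul_nonneg
      (mul_nonneg hα (Real.rpow_nonneg (sub_pos.2 (hlt s hs)).le _)) (sub_nonneg.2 (hmin s hs))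
  rw [hparts]
  linarith

theorem tendsto_sub_rpow_neg_mul_sub_nhdsLT {f : ℝ → ℝ} {f₀ t α : ℝ} (hf : HasDerivAt f f₀ t)
    (hα : α < 1) : Tendsto (fun c => (t - c) ^ (-α) * (f c - f t)) (𝓝[<] t) (𝓝 0) := by
  have hslope : Tendsto (slope f t) (𝓝[<] t) (𝓝 f₀) :=
    (hasDerivAt_iff_tendsto_slope.1 hf).mono_left (nhdsWithin_mono _ fun c hc => ne_of_lt hc)
  have hpow : Tendsto (fun c => (t - c) ^ (1 - α)) (𝓝[<] t) (𝓝 0) := by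
    have : ContinuousAt (fun c => (t - c) ^ (1 - α)) t :=
      (Real.continuousAt_rpow_const _ _ (Or.inr (by linarith))).comp
        (continuous_sub_left t).continuousAt
    simpa [Real.zero_rpow (by linarith : 1 - α ≠ 0)] using
      this.tendsto.mono_left nhdsWithin_le_nhds
  have hprod := (hpow.mul hslope).neg
  rw [zero_mul, neg_zero] at hprod
  refine hprod.congr' ?_
  filter_upwards [self_mem_nhdsWithin] with c (hc : c < t)
  have hne : c - t ≠ 0 := sub_ne_zero.2 hc.ne
  rw [slope_def_field, show 1 - α = -α + 1 by ring, Real.rpow_add (sub_pos.2 hc), Real.rpow_one,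
    ← neg_sub c t]
  field_simp

theorem integral_sub_rpow_neg_mul_deriv_nonpos_of_isMinOn {f f' : ℝ → ℝ} {a t α : ℝ}
    (hat : a < t) (hα0 : 0 ≤ α) (hα1 : α < 1) (hf : ContinuousOn f (Icc a t))
    (hf' : ContinuousOn f' (Icc a t))
    (hderiv : ∀ s ∈ Ioc a t, HasDerivAt f (f' s) s) (hmin : IsMinOn f (Icc a t) t) :
    ∫ s in a..t, (t - s) ^ (-α) * f' s ≤ 0 := by
  have hint : IntervalIntegrable (fun s => (t - s) ^ (-α) * f' s) volume a t :=
    (intervalIntegrable_sub_rpow_neg hα1 a t).mul_continuousOn (by rwa [uIcc_of_le hat.le])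
  have hprimitive : Tendsto (fun c => ∫ s in a..c, (t - s) ^ (-α) * f' s) (𝓝[<] t)
      (𝓝 (∫ s in a..t, (t - s) ^ (-α) * f' s)) :=
    (continuousOn_primitive_interval' hint left_mem_uIcc t right_mem_uIcc).mono_of_mem_nhdsWithin
      (by simpa [uIcc_of_le hat.le] using Icc_mem_nhdsLT hat) |>.tendsto
  refine le_of_tendsto_of_tendsto hprimitive
    (tendsto_sub_rpow_neg_mul_sub_nhdsLT (hderiv t ⟨hat, le_rfl⟩) hα1) ?_
  filter_upwards [Ioo_mem_nhdsLT hat] with c hc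
  have hsub : Icc a c ⊆ Icc a t := Icc_subset_Icc_right hc.2.le
  exact integral_sub_rpow_neg_mul_deriv_le hc.1.le hc.2 hα0 (hf.mono hsub)
    (fun s hs => hderiv s ⟨hs.1, hs.2.le.trans hc.2.le⟩)
    ((hf'.mono hsub).intervalIntegrable_of_Icc hc.1.le) fun s hs => isMinOn_iff.1 hmin s (hsub hs)

theorem caputo_nonpos_at_global_min (a b : ℝ) (hab : a < b) (f : ℝ → ℝ)
    (hf : ContDiffOn ℝ 1 f (Set.Icc a b))
    (tstar : ℝ) (htstar : tstar ∈ Set.Ioo a b)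
    (hmin : ∀ t ∈ Set.Icc a b, f tstar ≤ f t) :
    ∀ α ∈ Set.Ioo (0 : ℝ) 1, caputoDeriv a α f tstar ≤ 0 := by
  rintro α ⟨hα0, hα1⟩
  obtain ⟨hat, htb⟩ := htstar
  have hsub : Icc a tstar ⊆ Icc a b := Icc_subset_Icc_right htb.le
  have hderiv : ∀ s ∈ Ioo a b, HasDerivAt f (derivWithin f (Icc a b) s) s := fun s hs => by
    rw [derivWithin_of_mem_nhds (Icc_mem_nhds hs.1 hs.2)]
    exact (hf.differentiableOn one_ne_zero s (Ioo_subset_Icc_self hs)).differentiableAt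
      (Icc_mem_nhds hs.1 hs.2) |>.hasDerivAt
  -- `hf` says nothing about `deriv f a`; `derivWithin` agrees with `deriv f` on `(a, tstar]`.
  have hintegral : ∫ s in a..tstar, (tstar - s) ^ (-α) * deriv f s
      = ∫ s in a..tstar, (tstar - s) ^ (-α) * derivWithin f (Icc a b) s :=
    integral_congr_ae <| Eventually.of_forall fun s hs => by
      rw [uIoc_of_le hat.le] at hs
      rw [(hderiv s ⟨hs.1, hs.2.trans_lt htb⟩).deriv]
  have hnonpos := integral_sub_rpow_neg_mul_deriv_nonpos_of_isMinOn hat hα0.le hα1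
    (hf.continuousOn.mono hsub)
    ((hf.continuousOn_derivWithin (uniqueDiffOn_Icc hab) le_rfl).mono hsub)
    (fun s hs => hderiv s ⟨hs.1, hs.2.trans_lt htb⟩) (isMinOn_iff.2 hmin |>.on_subset hsub)
  rw [caputoDeriv, hintegral]
  exact mul_nonpos_of_nonneg_of_nonpos (inv_nonneg.2 (Real.Gamma_pos_of_pos (by linarith)).le)
    hnonpos
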